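/- Let n ≥ 1 and let α₁ > α₂ > ⋯ > αₙ > 0 be real numbers. Set β_k = α_k − α_{k+1} for k ∈ [n], with the convention α_{n+1} = 0, so that all β_k > 0. For k ∈ [n] let Q(k,n) = {x ∈ [0,1]ⁿ : Σ_{i=1}^{n} x_i ≤ k}. Then the SIM-body decomposes as the Minkowski sum Λ(α₁,…,αₙ) = β₁·Q(1,n) + β₂·Q(2,n) + ⋯ + βₙ·Q(n,n), where βᵢ·Q(i,n) denotes the dilate {βᵢ x : x ∈ Q(i,n)} and + denotes Minkowski addition of subsets of ℝⁿ. -/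

import Mathlib

/-!
Both sides are compact convex sets, so by Hahn–Banach it suffices to show that for every linear
functional `w` and every point `x` of the SIM-body, some point of the Minkowski sum has a larger
`w`-value. Extend `α` by zeros to a sequence `a` and put `βⱼ = aⱼ - aⱼ₊₁`; Abel summation gives
`∑ⱼ βⱼ ∑_{l ≤ j} c_l = ∑_l a_l c_l`. Sort the positive parts `w⁺` decreasingly along a permutation
`σ`. The prefix sums of `x ∘ σ` are bounded by those of `a`, so Abel summation against the
decreasing sequence `w⁺ ∘ σ` gives `w ⬝ x ≤ ∑_l w⁺_{σ l} a_l`, which is the value of `w` at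
`∑ⱼ βⱼ 1_{Sⱼ}`, where `Sⱼ` holds the `j + 1` coordinates of largest positive weight.
Conversely, a point of `Q(j + 1, n)` has mass at most `min(|I|, j + 1)` on `I`, and the identity
with `c_l = [l < |I|]` turns `∑ⱼ βⱼ min(|I|, j + 1)` into `a₀ + ⋯ + a_{|I|-1}`.
-/

open Finset Pointwise

/-- The SIM-body `Λ(α₁,…,αₙ)` for parameters `α : Fin n → ℝ` (0-indexed). -/
def SIM {n : ℕ} (α : Fin n → ℝ) : Set (Fin n → ℝ) :=
  {x | (∀ i, 0 ≤ x i) ∧ ∀ I : Finset (Fin n), I.Nonempty →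
    ∑ i ∈ I, x i ≤ ∑ j ∈ Finset.univ.filter (fun j : Fin n => (j : ℕ) < I.card), α j}

/-- The polytope `Q(k,n) = {x ∈ [0,1]ⁿ : Σᵢ xᵢ ≤ k}`. -/
def Qpoly (n k : ℕ) : Set (Fin n → ℝ) :=
  {x | (∀ i, x i ∈ Set.Icc (0 : ℝ) 1) ∧ ∑ i, x i ≤ (k : ℝ)}

noncomputable def extendByZero {n : ℕ} (α : Fin n → ℝ) (l : ℕ) : ℝ :=
  if h : l < n then α ⟨l, h⟩ else 0

section extendByZero

variable {n : ℕ}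

@[simp]
lemma extendByZero_val (α : Fin n → ℝ) (i : Fin n) : extendByZero α i = α i := by
  simp [extendByZero]

lemma extendByZero_of_le (α : Fin n → ℝ) {l : ℕ} (hl : n ≤ l) : extendByZero α l = 0 := by
  simp [extendByZero, hl.not_gt]

lemma antitone_extendByZero {α : Fin n → ℝ} (hα : Antitone α) (h0 : ∀ i, 0 ≤ α i) :
    Antitone (extendByZero α) := by
  refine antitone_nat_of_succ_le fun l => ?_
  unfold extendByZero
  split_ifs with h1 h2 h2
  · exact hα (Fin.mk_le_mk.2 l.le_succ)
  · omega
  · exact h0 _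
  · rfl

lemma sum_range_ite_lt_extendByZero (α : Fin n → ℝ) (m : ℕ) :
    ∑ l ∈ range n, (if l < m then extendByZero α l else 0) = ∑ l ∈ range m, extendByZero α l := by
  rw [← sum_filter]
  refine sum_subset (fun l hl => by simp_all) fun l hm hl => extendByZero_of_le α ?_
  simp_all

lemma sum_filter_val_lt (α : Fin n → ℝ) (m : ℕ) :
    ∑ j ∈ univ.filter (fun j : Fin n => (j : ℕ) < m), α j = ∑ l ∈ range m, extendByZero α l := by
  rw [← sum_range_ite_lt_extendByZero,
    ← Fin.sum_univ_eq_sum_range (fun l => if l < m then extendByZero α l else 0), sum_filter]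
  simp

end extendByZero

lemma sum_range_mul_by_parts (f g : ℕ → ℝ) (N : ℕ) :
    ∑ i ∈ range N, f i * g i =
      ∑ i ∈ range N, (f i - f (i + 1)) * ∑ k ∈ range (i + 1), g k +
        f N * ∑ k ∈ range N, g k := by
  induction N with
  | zero => simp
  | succ N ih => rw [sum_range_succ, ih, sum_range_succ _ N, sum_range_succ g N]; ring

lemma sum_range_mul_le_of_antitone {f g h : ℕ → ℝ} {N : ℕ} (hf : Antitone f) (hfN : 0 ≤ f N)
    (hgh : ∀ m ≤ N, ∑ k ∈ range m, g k ≤ ∑ k ∈ range m, h k) :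
    ∑ i ∈ range N, f i * g i ≤ ∑ i ∈ range N, f i * h i := by
  rw [sum_range_mul_by_parts f g, sum_range_mul_by_parts f h]
  refine add_le_add (sum_le_sum fun i hi => ?_) (mul_le_mul_of_nonneg_left (hgh N le_rfl) hfN)
  exact mul_le_mul_of_nonneg_left (hgh _ (mem_range.1 hi)) (sub_nonneg.2 (hf i.le_succ))

lemma sum_sub_extendByZero_mul_sum_range {n : ℕ} (α : Fin n → ℝ) (c : ℕ → ℝ) :
    ∑ j : Fin n, (extendByZero α j - extendByZero α (j + 1)) * ∑ l ∈ range (j + 1), c l =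
      ∑ l ∈ range n, extendByZero α l * c l := by
  rw [sum_range_mul_by_parts, extendByZero_of_le α le_rfl, zero_mul, add_zero,
    Fin.sum_univ_eq_sum_range
      (fun j => (extendByZero α j - extendByZero α (j + 1)) * ∑ l ∈ range (j + 1), c l)]

lemma sum_range_boole_lt (m k : ℕ) :
    ∑ l ∈ range k, (if l < m then (1 : ℝ) else 0) = min (m : ℝ) k := by
  have : (range k).filter (· < m) = range (min m k) := by ext; simp; omega
  rw [sum_boole, this, card_range, Nat.cast_min]

lemma sum_smul_set_eq_image_pi {ι R E : Type*} [Fintype ι] [AddCommMonoid E] [SMul R E]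
    (β : ι → R) (S : ι → Set E) :
    ∑ j, β j • S j = (fun q : ι → E => ∑ j, β j • q j) '' Set.univ.pi S := by
  ext x
  simp only [Set.mem_fintype_sum, Set.mem_smul_set, Set.mem_image, Set.mem_univ_pi]
  constructor
  · rintro ⟨g, hg, rfl⟩
    choose q hq hqg using hg
    exact ⟨q, hq, by simp only [hqg]⟩
  · rintro ⟨q, hq, rfl⟩
    exact ⟨fun j => β j • q j, fun j => ⟨q j, hq j, rfl⟩, rfl⟩

section Qpoly

variable {n k : ℕ}

lemma Qpoly_eq_Icc_inter : Qpoly n k = Set.Icc 0 1 ∩ {x | ∑ i, x i ≤ (k : ℝ)} := by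
  ext x
  simp [Qpoly, Pi.le_def, forall_and]

lemma convex_Qpoly : Convex ℝ (Qpoly n k) := by
  rw [Qpoly_eq_Icc_inter]
  exact (convex_Icc 0 1).inter <| convex_halfSpace_le
    ⟨fun x y => by simp [sum_add_distrib], fun c x => by simp [mul_sum]⟩ _

lemma isCompact_Qpoly : IsCompact (Qpoly n k) := by
  rw [Qpoly_eq_Icc_inter]
  exact isCompact_Icc.inter_right (isClosed_le (by fun_prop) continuous_const)

lemma sum_le_min_of_mem_Qpoly {q : Fin n → ℝ} (hq : q ∈ Qpoly n k) (I : Finset (Fin n)) :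
    ∑ i ∈ I, q i ≤ min (#I : ℝ) k :=
  le_min (by simpa using sum_le_sum fun i (_ : i ∈ I) => (hq.1 i).2)
    ((sum_le_univ_sum_of_nonneg fun i => (hq.1 i).1).trans hq.2)

lemma indicator_mem_Qpoly {s : Finset (Fin n)} (hs : #s ≤ k) :
    (fun i => if i ∈ s then (1 : ℝ) else 0) ∈ Qpoly n k :=
  ⟨fun i => by dsimp only; split_ifs <;> simp, by simpa [sum_boole] using hs⟩

end Qpoly

noncomputable def qpolySum {n : ℕ} (α : Fin n → ℝ) : Set (Fin n → ℝ) :=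
  ∑ j : Fin n, (extendByZero α j - extendByZero α (j + 1)) • Qpoly n (j + 1)

section qpolySum

variable {n : ℕ}

lemma mem_qpolySum_iff {α x : Fin n → ℝ} :
    x ∈ qpolySum α ↔ ∃ q : Fin n → Fin n → ℝ, (∀ j : Fin n, q j ∈ Qpoly n (j + 1)) ∧
      ∑ j : Fin n, (extendByZero α j - extendByZero α (j + 1)) • q j = x := by
  simp [qpolySum, sum_smul_set_eq_image_pi]

lemma convex_qpolySum (α : Fin n → ℝ) : Convex ℝ (qpolySum α) :=
  convex_sum _ fun _ _ => convex_Qpoly.smul _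

lemma isCompact_qpolySum (α : Fin n → ℝ) : IsCompact (qpolySum α) := by
  rw [qpolySum, sum_smul_set_eq_image_pi]
  exact (isCompact_univ_pi fun _ => isCompact_Qpoly).image (by fun_prop)

end qpolySum

section SIM

variable {n : ℕ} {α x : Fin n → ℝ}

lemma comp_perm_mem_SIM (hx : x ∈ SIM α) (σ : Equiv.Perm (Fin n)) : x ∘ σ ∈ SIM α := by
  refine ⟨fun i => hx.1 (σ i), fun I hI => ?_⟩
  simpa [sum_map] using hx.2 (I.map σ.toEmbedding) hI.map

lemma sum_range_extendByZero_le_of_mem_SIM (hx : x ∈ SIM α) {m : ℕ} (hm : m ≤ n) :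
    ∑ l ∈ range m, extendByZero x l ≤ ∑ l ∈ range m, extendByZero α l := by
  rcases m.eq_zero_or_pos with rfl | hm0
  · simp
  have hI : (univ.filter fun j : Fin n => (j : ℕ) < m).Nonempty := ⟨⟨0, by omega⟩, by simpa⟩
  have hcard : #(univ.filter fun j : Fin n => (j : ℕ) < m) = m := by
    rw [Fin.card_filter_val_lt]; omega
  simpa only [hcard, sum_filter_val_lt] using hx.2 _ hI

lemma qpolySum_subset_SIM (hα : Antitone (extendByZero α)) : qpolySum α ⊆ SIM α := by
  intro x hx
  obtain ⟨q, hq, rfl⟩ := mem_qpolySum_iff.1 hx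
  have hβ (j : Fin n) : 0 ≤ extendByZero α j - extendByZero α (j + 1) :=
    sub_nonneg.2 (hα (Nat.le_succ _))
  simp only [SIM, Finset.sum_apply, Pi.smul_apply, smul_eq_mul, Set.mem_ofPred_eq]
  refine ⟨fun i => sum_nonneg fun j _ => mul_nonneg (hβ j) ((hq j).1 i).1, fun I _ => ?_⟩
  calc ∑ i ∈ I, ∑ j : Fin n, (extendByZero α j - extendByZero α (j + 1)) * q j i
      = ∑ j : Fin n, (extendByZero α j - extendByZero α (j + 1)) * ∑ i ∈ I, q j i := by
        rw [sum_comm]; simp only [mul_sum]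
    _ ≤ ∑ j : Fin n, (extendByZero α j - extendByZero α (j + 1)) *
          ∑ l ∈ range (j + 1), if l < #I then 1 else 0 := by
        gcongr with j
        · exact hβ j
        · rw [sum_range_boole_lt]; exact sum_le_min_of_mem_Qpoly (hq j) I
    _ = ∑ l ∈ range n, if l < #I then extendByZero α l else 0 := by
        simp only [sum_sub_extendByZero_mul_sum_range, mul_ite, mul_one, mul_zero]
    _ = _ := by rw [sum_range_ite_lt_extendByZero, sum_filter_val_lt]

lemma exists_mem_qpolySum_dotProduct_le (hx : x ∈ SIM α) (w : Fin n → ℝ) :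
    ∃ z ∈ qpolySum α, w ⬝ᵥ x ≤ w ⬝ᵥ z := by
  set p : Fin n → ℝ := fun i => max (w i) 0
  set σ := Tuple.sort (OrderDual.toDual ∘ p)
  have hσ : Antitone (p ∘ σ) := Tuple.monotone_sort (OrderDual.toDual ∘ p)
  set v := extendByZero (p ∘ σ)
  set q : Fin n → Fin n → ℝ := fun j i => if (σ.symm i : ℕ) < j + 1 ∧ 0 < w i then 1 else 0
  have hq (j : Fin n) : q j ∈ Qpoly n (j + 1) := by
    have hs : #(univ.filter fun i => (σ.symm i : ℕ) < j + 1 ∧ 0 < w i) ≤ j + 1 := calc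
      _ ≤ #((univ.filter fun l : Fin n => (l : ℕ) < j + 1).map σ.toEmbedding) :=
        card_le_card fun i hi => by simp_all [mem_map_equiv]
      _ ≤ j + 1 := by rw [card_map, Fin.card_filter_val_lt]; exact min_le_right _ _
    simpa [q] using indicator_mem_Qpoly hs
  have hwq (j : Fin n) : w ⬝ᵥ q j = ∑ l ∈ range (j + 1), v l := by
    calc w ⬝ᵥ q j = ∑ i, if (σ.symm i : ℕ) < j + 1 then p i else 0 :=
          sum_congr rfl fun i _ => by
            by_cases hw : 0 < w i
            · simp [q, p, hw, hw.le]
            · simp [q, p, hw, not_lt.1 hw]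
      _ = ∑ l : Fin n, if (l : ℕ) < j + 1 then p (σ l) else 0 := by
          rw [← Equiv.sum_comp σ]; simp
      _ = _ := by rw [← sum_filter, sum_filter_val_lt]; rfl
  refine ⟨_, mem_qpolySum_iff.2 ⟨q, hq, rfl⟩, ?_⟩
  calc w ⬝ᵥ x ≤ p ⬝ᵥ x :=
        sum_le_sum fun i _ => mul_le_mul_of_nonneg_right (le_max_left _ _) (hx.1 i)
    _ = ∑ l ∈ range n, v l * extendByZero (x ∘ σ) l := by
      rw [← Fin.sum_univ_eq_sum_range (fun l => v l * extendByZero (x ∘ σ) l), dotProduct,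
        ← Equiv.sum_comp σ]
      simp [v]
    _ ≤ ∑ l ∈ range n, v l * extendByZero α l :=
      sum_range_mul_le_of_antitone
        (antitone_extendByZero hσ fun i => le_max_right _ _) (extendByZero_of_le _ le_rfl).ge
        fun m hm => sum_range_extendByZero_le_of_mem_SIM (comp_perm_mem_SIM hx σ) hm
    _ = ∑ j : Fin n, (extendByZero α j - extendByZero α (j + 1)) * (w ⬝ᵥ q j) := by
      simp only [hwq, sum_sub_extendByZero_mul_sum_range, mul_comm]
    _ = w ⬝ᵥ ∑ j : Fin n, (extendByZero α j - extendByZero α (j + 1)) • q j := by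
      simp [dotProduct_sum, dotProduct_smul]

lemma SIM_subset_qpolySum : SIM α ⊆ qpolySum α := by
  intro x hx
  rw [← iInter_halfSpaces_eq (convex_qpolySum α) (isCompact_qpolySum α).isClosed]
  refine Set.mem_iInter.2 fun f => ?_
  have hf (y : Fin n → ℝ) : f y = (fun i => f fun j => if i = j then 1 else 0) ⬝ᵥ y := by
    rw [dotProduct, ← f.coe_coe, (f : (Fin n → ℝ) →ₗ[ℝ] ℝ).pi_apply_eq_sum_univ]
    simp [mul_comm]
  obtain ⟨z, hz, hle⟩ := exists_mem_qpolySum_dotProduct_le hx _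
  exact ⟨z, hz, (hf x).trans_le (hle.trans_eq (hf z).symm)⟩

end SIM

theorem sim_body_minkowski_decomposition_general (n : ℕ) (α : Fin n → ℝ)
    (hdec : ∀ i j : Fin n, i < j → α j < α i) (hpos : ∀ i, 0 < α i) :
    SIM α = ∑ j : Fin n,
      (α j - (if h : (j : ℕ) + 1 < n then α ⟨(j : ℕ) + 1, h⟩ else 0)) •
        Qpoly n ((j : ℕ) + 1) := by
  have hβ (j : Fin n) : α j - (if h : (j : ℕ) + 1 < n then α ⟨(j : ℕ) + 1, h⟩ else 0) =
      extendByZero α j - extendByZero α (j + 1) := by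
    simp [extendByZero]
  have hα : Antitone (extendByZero α) :=
    antitone_extendByZero (show StrictAnti α from fun _ _ => hdec _ _).antitone fun i => (hpos i).le
  simp only [hβ]
  exact SIM_subset_qpolySum.antisymm (qpolySum_subset_SIM hα)

/-- for strictly decreasing positive parameters, the SIM-body decomposes as the
Minkowski sum `Λ(α₁,…,αₙ) = β₁·Q(1,n) + ⋯ + βₙ·Q(n,n)`, where `β_k = α_k − α_{k+1}` (with
`α_{n+1} = 0`). -/
theorem sim_body_minkowski_decomposition (n : ℕ) (hn : 1 ≤ n) (α : Fin n → ℝ)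
    (hdec : ∀ i j : Fin n, i < j → α j < α i) (hpos : ∀ i, 0 < α i) :
    SIM α = ∑ j : Fin n,
      (α j - (if h : (j : ℕ) + 1 < n then α ⟨(j : ℕ) + 1, h⟩ else 0)) •
        Qpoly n ((j : ℕ) + 1) :=
  sim_body_minkowski_decomposition_general n α hdec hpos
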